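/- arXiv:2501.15837 — 2 statements merged into one kernel-verified Lean document; each statement's English description precedes it below -/
import Mathlib

section
/- Let λ1, λ2, λ3, λ4 ∈ M be dominant weights satisfying λ1 + λ2 = λ3 + λ4 and, for every positive root α, |⟨λ1 − λ2, α^∨⟩| ≤ |⟨λ3 − λ4, α^∨⟩|. Assume moreover that both polytopes P_{λ1,λ2} and P_{λ3,λ4} are contained in the closed dominant chamber C_f. Then P_{λ3,λ4} ⊆ P_{λ1,λ2}. -/
open Set Module Function

/-- A root system: a root pairing whose roots span `M` and whose coroots span `N`
(the definition of `RootSystem` in the older Mathlib, which has since been removed). -/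
structure RootSystem (ι R M N : Type*) [CommRing R] [AddCommGroup M] [Module R M]
    [AddCommGroup N] [Module R N] extends RootPairing ι R M N where
  span_eq_top : Submodule.span R (range root) = ⊤
  span_eq_top' : Submodule.span R (range coroot) = ⊤

/-- `b : I → ι` indexes a base of simple roots of the root system `P`: the map is injective,
the simple roots are linearly independent, and every root is either a nonnegative or a
nonpositive integer combination of the simple roots. -/
structure RootSystem.IsBase {ι M N I : Type*} [Fintype I]
    [AddCommGroup M] [Module ℝ M] [AddCommGroup N] [Module ℝ N]
    (P : RootSystem ι ℝ M N) (b : I → ι) : Prop where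
  injective : Function.Injective b
  linearIndependent : LinearIndependent ℝ fun i : I => P.root (b i)
  exists_coeffs : ∀ j : ι,
    (∃ c : I → ℕ, P.root j = ∑ i, (c i : ℝ) • P.root (b i)) ∨
    (∃ c : I → ℕ, P.root j = - ∑ i, (c i : ℝ) • P.root (b i))

/-- The root indexed by `j` is a positive root with respect to the base `b`: it is a
nonnegative integer combination of the simple roots. -/
def RootSystem.IsPositiveRoot {ι M N I : Type*} [Fintype I]
    [AddCommGroup M] [Module ℝ M] [AddCommGroup N] [Module ℝ N]
    (P : RootSystem ι ℝ M N) (b : I → ι) (j : ι) : Prop :=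
  ∃ c : I → ℕ, P.root j = ∑ i, (c i : ℝ) • P.root (b i)

/-- A weight `x ∈ M` is dominant if its pairing with every simple coroot is nonnegative. -/
def RootSystem.IsDominant {ι M N I : Type*}
    [AddCommGroup M] [Module ℝ M] [AddCommGroup N] [Module ℝ N]
    (P : RootSystem ι ℝ M N) (b : I → ι) (x : M) : Prop :=
  ∀ i : I, 0 ≤ P.coroot' (b i) x

/-- The closed dominant (fundamental) chamber `C_f`. -/
def RootSystem.chamber {ι M N I : Type*}
    [AddCommGroup M] [Module ℝ M] [AddCommGroup N] [Module ℝ N]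
    (P : RootSystem ι ℝ M N) (b : I → ι) : Set M :=
  {x : M | P.IsDominant b x}

/-- The polytope `P_{λ,μ}`: the convex hull of the orbit-translate `{λ + w μ : w ∈ W}`. -/
def RootSystem.orbitPolytope {ι M N : Type*}
    [AddCommGroup M] [Module ℝ M] [AddCommGroup N] [Module ℝ N]
    (P : RootSystem ι ℝ M N) (lam mu : M) : Set M :=
  convexHull ℝ {x : M | ∃ w ∈ P.weylGroup, x = lam + w • mu}

open scoped Pointwise

/-!
At a simple root `αᵢ`, the chamber condition at `λ + sᵢ μ` gives `⟨μ, αᵢ^∨⟩ ≤ ⟨λ, αᵢ^∨⟩` for both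
polytopes, so hypothesis (*) at `αᵢ` reads `⟨λ₁ - λ₂, αᵢ^∨⟩ ≤ ⟨λ₃ - λ₄, αᵢ^∨⟩`; with
`λ₁ + λ₂ = λ₃ + λ₄` this makes `ν = λ₃ - λ₁` dominant, and `λ₂ = ν + λ₄`. It therefore suffices
that `ν + w μ ∈ conv (W (ν + μ))` whenever `ν` and `μ` are dominant.

Write `w` as a word in the simple reflections and split off its last letter, `w = u sᵢ`. If
`u αᵢ` is a negative root, the deletion condition shortens the word. Otherwise
`ν + w μ = (ν + u μ) - ⟨μ, αᵢ^∨⟩ u αᵢ` with `0 ≤ ⟨μ, αᵢ^∨⟩ ≤ ⟨ν + u μ, (u αᵢ)^∨⟩`, so it lies on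
the segment from `ν + u μ` to its mirror image in `u αᵢ`, and induction on the length of the
word applies.
-/

namespace RootPairing

section CommRing

variable {ι R M N : Type*} [CommRing R] [AddCommGroup M] [Module R M] [AddCommGroup N]
  [Module R N] {P : RootPairing ι R M N}

namespace Equiv

lemma reflection_smul_index (i j : ι) : reflection P i • j = P.reflectionPerm i j := rfl

lemma root_smul (w : P.Aut) (i : ι) : P.root (w • i) = w • P.root i :=
  root_indexEquiv_eq_smul P i w

lemma reflection_mul_self (i : ι) : reflection P i * reflection P i = 1 :=
  mul_eq_one_iff_eq_inv.mpr (reflection_inv P i).symm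

lemma reflection_reflectionPerm (i j : ι) :
    reflection P (P.reflectionPerm j i) = reflection P j * reflection P i * reflection P j :=
  weightHom_injective P <| by simp [RootPairing.reflection_reflectionPerm]; rfl

lemma reflection_reflectionPerm_self (i : ι) :
    reflection P (P.reflectionPerm i i) = reflection P i := by
  rw [reflection_reflectionPerm, reflection_mul_self, one_mul]

end Equiv

lemma coroot'_smul_smul {w : P.Aut} (hw : w ∈ P.weylGroup) (j : ι) (x : M) :
    P.coroot' (w • j) (w • x) = P.coroot' j x := by
  induction hw using weylGroup.induction generalizing j x with
  | mem i =>
    rw [Equiv.reflection_smul_index, Equiv.reflection_smul, coroot'_reflection, reflectionPerm_self]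
  | one => simp
  | mul u v _ _ hu hv => rw [mul_smul, mul_smul, hu, hv]

lemma mul_reflection_mul_inv {w : P.Aut} (hw : w ∈ P.weylGroup) (j : ι) :
    w * Equiv.reflection P j * w⁻¹ = Equiv.reflection P (w • j) := by
  induction hw using weylGroup.induction generalizing j with
  | mem i =>
    rw [Equiv.reflection_smul_index, Equiv.reflection_reflectionPerm, Equiv.reflection_inv]
  | one => simp
  | mul u v _ _ hu hv => rw [mul_inv_rev, mul_smul, ← hu, ← hv]; group

lemma rootForm_root_self_mul_coroot' [Fintype ι] (j : ι) (x : M) :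
    P.RootForm (P.root j) (P.root j) * P.coroot' j x = 2 * P.RootForm (P.root j) x := by
  have := congrArg (P.toLinearMap x) (P.rootForm_self_smul_coroot j)
  rw [map_smul, map_nsmul, toLinearMap_apply_apply_Polarization] at this
  simpa [nsmul_eq_mul] using this

lemma smul_mem_convexHull_orbit [PartialOrder R] {w : P.Aut} (hw : w ∈ P.weylGroup) {lam x : M}
    (hx : x ∈ convexHull R (MulAction.orbit P.weylGroup lam)) :
    w • x ∈ convexHull R (MulAction.orbit P.weylGroup lam) := by
  have hwx : w • x ∈ (Equiv.weightHom P w : M →ₗ[R] M) ''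
      convexHull R (MulAction.orbit P.weylGroup lam) := ⟨x, hx, rfl⟩
  rw [LinearMap.image_convexHull] at hwx
  refine convexHull_mono ?_ hwx
  rintro _ ⟨y, hy, rfl⟩
  exact MulAction.mem_orbit_of_mem_orbit (⟨w, hw⟩ : P.weylGroup) hy

namespace Base

variable (B : P.Base)

noncomputable def reflectionProd (L : List B.support) : P.Aut :=
  (L.map fun i ↦ Equiv.reflection P i).prod

@[simp] lemma reflectionProd_nil : B.reflectionProd [] = 1 := rfl

@[simp] lemma reflectionProd_cons (i : B.support) (L : List B.support) :
    B.reflectionProd (i :: L) = Equiv.reflection P i * B.reflectionProd L := rfl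

@[simp] lemma reflectionProd_append (L L' : List B.support) :
    B.reflectionProd (L ++ L') = B.reflectionProd L * B.reflectionProd L' := by
  simp [reflectionProd]

lemma reflectionProd_concat (L : List B.support) (i : B.support) :
    B.reflectionProd (L ++ [i]) = B.reflectionProd L * Equiv.reflection P i := by
  simp

lemma reflectionProd_mem_weylGroup (L : List B.support) : B.reflectionProd L ∈ P.weylGroup :=
  Subgroup.list_prod_mem _ <| by
    simp only [List.mem_map]
    rintro _ ⟨i, -, rfl⟩
    exact P.reflection_mem_weylGroup i

lemma exists_root_eq_sum_nat_of_isPos [CharZero R] {j : ι} (hj : B.IsPos j) :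
    ∃ f : ι → ℕ, P.root j = ∑ i ∈ B.support, f i • P.root i := by
  obtain ⟨f, -, hf | hf⟩ := B.exists_root_eq_sum_nat_or_neg j
  · exact ⟨f, hf⟩
  · have hneg : P.root j = ∑ i ∈ B.support, (-(f i : ℤ)) • P.root i := by simp [hf]
    have hheight := B.height_eq_sum hneg
    have hf₀ : 0 ≤ ∑ i ∈ B.support, (f i : ℤ) := Finset.sum_nonneg fun i _ ↦ by positivity
    rw [isPos_iff] at hj
    simp only [Finset.sum_neg_distrib] at hheight
    lia

variable [CharZero R] [IsDomain R] [Finite ι] [P.IsCrystallographic] [P.IsReduced]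

lemma exists_reflectionProd_eq_reflection (j : ι) :
    ∃ L, B.reflectionProd L = Equiv.reflection P j := by
  refine B.induction_reflect (p := fun j ↦ ∃ L, B.reflectionProd L = Equiv.reflection P j) j
    (fun i ↦ ?_) (fun i hi ↦ ⟨[⟨i, hi⟩], by simp⟩) ?_
  · rw [Equiv.reflection_reflectionPerm_self]
    exact id
  · rintro i j ⟨L, hL⟩ hj
    exact ⟨⟨j, hj⟩ :: L ++ [⟨j, hj⟩], by simp [hL, Equiv.reflection_reflectionPerm]⟩

lemma exists_reflectionProd_eq {w : P.Aut} (hw : w ∈ P.weylGroup) :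
    ∃ L, B.reflectionProd L = w := by
  induction hw using weylGroup.induction with
  | mem j => exact B.exists_reflectionProd_eq_reflection j
  | one => exact ⟨[], rfl⟩
  | mul u v _ _ hu hv =>
    obtain ⟨L, rfl⟩ := hu
    obtain ⟨L', rfl⟩ := hv
    exact ⟨L ++ L', B.reflectionProd_append L L'⟩

lemma exists_reflectionProd_mul_reflection_eq (L : List B.support) {j : ι} (hj : B.IsPos j)
    (hLj : ¬ B.IsPos (B.reflectionProd L • j)) :
    ∃ L', L'.length + 1 = L.length ∧
      B.reflectionProd L * Equiv.reflection P j = B.reflectionProd L' := by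
  induction L with
  | nil => exact absurd hj (by simpa using hLj)
  | cons i L ih =>
    by_cases hLj' : B.IsPos (B.reflectionProd L • j)
    · have hi : B.reflectionProd L • j = i := by
        by_contra hne
        apply hLj
        rw [reflectionProd_cons, mul_smul, Equiv.reflection_smul_index]
        exact hLj'.reflectionPerm i.2 hne
      have hconj := mul_reflection_mul_inv (B.reflectionProd_mem_weylGroup L) j
      rw [hi, mul_inv_eq_iff_eq_mul] at hconj
      refine ⟨L, rfl, ?_⟩
      rw [reflectionProd_cons, mul_assoc, hconj, ← mul_assoc, Equiv.reflection_mul_self, one_mul]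
    · obtain ⟨L', hlen, hL'⟩ := ih hLj'
      refine ⟨i :: L', by simp [hlen], ?_⟩
      rw [reflectionProd_cons, mul_assoc, hL', reflectionProd_cons]

end Base

end CommRing

section OrderedField

variable {ι R M N : Type*} [Field R] [LinearOrder R] [IsStrictOrderedRing R] [AddCommGroup M]
  [Module R M] [AddCommGroup N] [Module R N] {P : RootPairing ι R M N}

lemma rootForm_root_self_pos [Fintype ι] (j : ι) : 0 < P.RootForm (P.root j) (P.root j) := by
  rw [rootForm_root_self]
  exact Finset.sum_pos' (fun i _ ↦ mul_self_nonneg _) ⟨j, by simp⟩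

lemma coroot'_nonneg_iff [Fintype ι] (j : ι) (x : M) :
    0 ≤ P.coroot' j x ↔ 0 ≤ P.RootForm (P.root j) x := by
  rw [← mul_nonneg_iff_of_pos_left (rootForm_root_self_pos (P := P) j),
    rootForm_root_self_mul_coroot', mul_nonneg_iff_of_pos_left two_pos]

-- `x - t α_j` lies on the segment from `x` to `s_j x = x - ⟨x, α_j^∨⟩ α_j`.
lemma sub_smul_root_mem_convexHull_orbit {lam x : M}
    (hx : x ∈ convexHull R (MulAction.orbit P.weylGroup lam)) (j : ι) {t : R} (ht₀ : 0 ≤ t)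
    (ht : t ≤ P.coroot' j x) :
    x - t • P.root j ∈ convexHull R (MulAction.orbit P.weylGroup lam) := by
  set p := P.coroot' j x
  have hsx : P.reflection j x ∈ convexHull R (MulAction.orbit P.weylGroup lam) :=
    smul_mem_convexHull_orbit (P.reflection_mem_weylGroup j) hx
  have hθ : t / p ∈ Icc (0 : R) 1 :=
    ⟨div_nonneg ht₀ (ht₀.trans ht), div_le_one_of_le₀ ht (ht₀.trans ht)⟩
  have hmem := (convex_convexHull R _).add_smul_sub_mem hx hsx hθ
  have htp : t / p * p = t := div_mul_cancel_of_imp fun hp ↦ le_antisymm (hp ▸ ht) ht₀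
  rwa [reflection_apply, sub_sub_cancel_left, smul_neg, smul_smul, htp, ← sub_eq_add_neg]
    at hmem

namespace Base

variable (B : P.Base) [Finite ι]

lemma coroot'_nonneg_of_isPos {x : M} (hx : ∀ i ∈ B.support, 0 ≤ P.coroot' i x) {j : ι}
    (hj : B.IsPos j) : 0 ≤ P.coroot' j x := by
  have := Fintype.ofFinite ι
  obtain ⟨f, hf⟩ := B.exists_root_eq_sum_nat_of_isPos hj
  rw [coroot'_nonneg_iff, hf, map_sum, LinearMap.sum_apply]
  refine Finset.sum_nonneg fun i hi ↦ ?_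
  rw [map_nsmul, LinearMap.smul_apply]
  exact nsmul_nonneg ((coroot'_nonneg_iff i x).mp (hx i hi)) _

variable [P.IsCrystallographic] [P.IsReduced]

theorem add_reflectionProd_smul_mem_convexHull_orbit {mu nu : M}
    (hmu : ∀ i ∈ B.support, 0 ≤ P.coroot' i mu) (hnu : ∀ i ∈ B.support, 0 ≤ P.coroot' i nu)
    (L : List B.support) :
    nu + B.reflectionProd L • mu ∈ convexHull R (MulAction.orbit P.weylGroup (nu + mu)) := by
  induction hL : L.length using Nat.strong_induction_on generalizing L with
  | _ n ih =>
    rcases L.eq_nil_or_concat' with rfl | ⟨T, i, rfl⟩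
    · simpa using subset_convexHull R _ (MulAction.mem_orbit_self (nu + mu))
    rw [reflectionProd_concat]
    set u := B.reflectionProd T
    by_cases hTi : B.IsPos (u • (i : ι))
    · set c := P.coroot' i mu
      have hu : u ∈ P.weylGroup := B.reflectionProd_mem_weylGroup T
      have hsmul :
          nu + (u * Equiv.reflection P i) • mu = nu + u • mu - c • P.root (u • (i : ι)) := by
        rw [mul_smul, Equiv.reflection_smul, reflection_apply, smul_sub, smul_comm,
          ← Equiv.root_smul, add_sub_assoc]
      have hc : c ≤ P.coroot' (u • (i : ι)) (nu + u • mu) := by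
        rw [map_add, coroot'_smul_smul hu]
        linarith [B.coroot'_nonneg_of_isPos hnu hTi]
      rw [hsmul]
      exact sub_smul_root_mem_convexHull_orbit (ih T.length (by simp [← hL]) T rfl) _ (hmu i i.2) hc
    · obtain ⟨T', hT', heq⟩ :=
        B.exists_reflectionProd_mul_reflection_eq T (B.isPos_of_mem_support i.2) hTi
      rw [heq]
      exact ih T'.length (by simp [← hL, ← hT']) T' rfl

theorem vadd_convexHull_orbit_subset {mu nu : M} (hmu : ∀ i ∈ B.support, 0 ≤ P.coroot' i mu)
    (hnu : ∀ i ∈ B.support, 0 ≤ P.coroot' i nu) :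
    nu +ᵥ convexHull R (MulAction.orbit P.weylGroup mu) ⊆
      convexHull R (MulAction.orbit P.weylGroup (nu + mu)) := by
  rw [← convexHull_vadd]
  refine convexHull_min ?_ (convex_convexHull R _)
  rintro _ ⟨_, ⟨w, rfl⟩, rfl⟩
  obtain ⟨L, hL⟩ := B.exists_reflectionProd_eq w.2
  have := B.add_reflectionProd_smul_mem_convexHull_orbit hmu hnu L
  rwa [hL] at this

end Base

end OrderedField

end RootPairing

namespace RootSystem

open RootPairing

variable {ι M N I : Type*} [AddCommGroup M] [Module ℝ M] [AddCommGroup N] [Module ℝ N]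
  {P : RootSystem ι ℝ M N} {b : I → ι}

instance {R : Type*} [CommRing R] [Module R M] [Module R N] (P : RootSystem ι R M N) :
    P.IsRootSystem :=
  ⟨P.span_eq_top, P.span_eq_top'⟩

lemma orbitPolytope_eq_vadd (lam mu : M) :
    P.orbitPolytope lam mu = lam +ᵥ convexHull ℝ (MulAction.orbit P.weylGroup mu) := by
  rw [orbitPolytope, ← convexHull_vadd]
  congr 1
  ext x
  simp [MulAction.mem_orbit_iff, mem_vadd_set, eq_comm]

lemma coroot'_le_of_orbitPolytope_subset_chamber {lam mu : M}
    (h : P.orbitPolytope lam mu ⊆ P.chamber b) (i : I) :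
    P.coroot' (b i) mu ≤ P.coroot' (b i) lam := by
  have hmem : lam + P.reflection (b i) mu ∈ P.chamber b := h <| subset_convexHull ℝ _
    ⟨Equiv.reflection P.toRootPairing (b i), P.reflection_mem_weylGroup (b i), rfl⟩
  have := hmem i
  rw [map_add, RootPairing.reflection_apply, map_sub, map_smul, root_coroot'_eq_pairing,
    pairing_same, smul_eq_mul] at this
  linarith

lemma isDominant_sub {lam1 lam2 lam3 lam4 : M} (hsum : lam1 + lam2 = lam3 + lam4)
    (hineq : ∀ i, |P.coroot' (b i) (lam1 - lam2)| ≤ |P.coroot' (b i) (lam3 - lam4)|)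
    (hP12 : P.orbitPolytope lam1 lam2 ⊆ P.chamber b)
    (hP34 : P.orbitPolytope lam3 lam4 ⊆ P.chamber b) :
    P.IsDominant b (lam3 - lam1) := fun i ↦ by
  have h12 := coroot'_le_of_orbitPolytope_subset_chamber hP12 i
  have h34 := coroot'_le_of_orbitPolytope_subset_chamber hP34 i
  have habs := hineq i
  have hsum' := congrArg (P.coroot' (b i)) hsum
  rw [map_sub, map_sub, abs_of_nonneg (by linarith), abs_of_nonneg (by linarith)] at habs
  rw [map_add, map_add] at hsum'
  rw [map_sub]
  linarith

variable [Fintype I]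

lemma isPositiveRoot_simple (i : I) : P.IsPositiveRoot b (b i) := by
  classical
  exact ⟨Pi.single i 1, by simp [Pi.single_apply]⟩

lemma sum_smul_root_mem_closure (c : I → ℕ) :
    ∑ i, (c i : ℝ) • P.root (b i) ∈ AddSubmonoid.closure (P.root '' range b) :=
  AddSubmonoid.sum_mem _ fun i _ ↦ by
    rw [Nat.cast_smul_eq_nsmul]
    exact AddSubmonoid.nsmul_mem _
      (AddSubmonoid.subset_closure (mem_image_of_mem P.root (mem_range_self i))) _

variable [Finite ι] [P.IsCrystallographic] [P.IsReduced]

noncomputable def IsBase.toBase (hb : P.IsBase b) : P.Base :=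
  Base.mk' P.toRootPairing (range b)
    ((linearIndepOn_range_iff hb.injective P.root).mpr hb.linearIndependent) fun j ↦ by
    rcases hb.exists_coeffs j with ⟨c, hc⟩ | ⟨c, hc⟩
    · exact .inl (hc ▸ sum_smul_root_mem_closure c)
    · exact .inr (by rw [hc, neg_neg]; exact sum_smul_root_mem_closure c)

lemma IsBase.mem_support_toBase (hb : P.IsBase b) {j : ι} :
    j ∈ hb.toBase.support ↔ j ∈ range b := by
  simp [IsBase.toBase, Base.mk']

lemma IsBase.isDominant_iff (hb : P.IsBase b) {x : M} :
    P.IsDominant b x ↔ ∀ j ∈ hb.toBase.support, 0 ≤ P.coroot' j x := by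
  simp [hb.mem_support_toBase, IsDominant]

end RootSystem

theorem schur_polytope_subset_general {ι M N I : Type*} [Fintype ι] [Fintype I]
    [AddCommGroup M] [Module ℝ M] [AddCommGroup N] [Module ℝ N]
    (P : RootSystem ι ℝ M N) (hcrys : P.IsCrystallographic) (hred : P.IsReduced)
    (b : I → ι) (hb : P.IsBase b)
    (lam1 lam2 lam3 lam4 : M)
    (h4 : P.IsDominant b lam4)
    (hsum : lam1 + lam2 = lam3 + lam4)
    (hineq : ∀ j : ι, P.IsPositiveRoot b j →
      |P.coroot' j (lam1 - lam2)| ≤ |P.coroot' j (lam3 - lam4)|)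
    (hP12 : P.orbitPolytope lam1 lam2 ⊆ P.chamber b)
    (hP34 : P.orbitPolytope lam3 lam4 ⊆ P.chamber b) :
    P.orbitPolytope lam3 lam4 ⊆ P.orbitPolytope lam1 lam2 := by
  have hdom : P.IsDominant b (lam3 - lam1) := RootSystem.isDominant_sub hsum
    (fun i ↦ hineq (b i) (RootSystem.isPositiveRoot_simple i)) hP12 hP34
  have hlam2 : lam3 - lam1 + lam4 = lam2 := by
    rw [sub_add_eq_add_sub, ← hsum, add_sub_cancel_left]
  calc P.orbitPolytope lam3 lam4
      = lam1 +ᵥ ((lam3 - lam1) +ᵥ convexHull ℝ (MulAction.orbit P.weylGroup lam4)) := by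
        rw [RootSystem.orbitPolytope_eq_vadd, vadd_vadd, add_sub_cancel]
    _ ⊆ lam1 +ᵥ convexHull ℝ (MulAction.orbit P.weylGroup (lam3 - lam1 + lam4)) :=
        vadd_set_mono <| hb.toBase.vadd_convexHull_orbit_subset
          (hb.isDominant_iff.mp h4) (hb.isDominant_iff.mp hdom)
    _ = P.orbitPolytope lam1 lam2 := by rw [hlam2, RootSystem.orbitPolytope_eq_vadd]

/-- Schur positivity polytope containment under hypothesis (*) and deep
dominance. -/
theorem schur_polytope_subset {ι M N I : Type*} [Fintype ι] [Fintype I]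
    [AddCommGroup M] [Module ℝ M] [AddCommGroup N] [Module ℝ N]
    (P : RootSystem ι ℝ M N) (hcrys : P.IsCrystallographic) (hred : P.IsReduced)
    (b : I → ι) (hb : P.IsBase b)
    (lam1 lam2 lam3 lam4 : M)
    (h1 : P.IsDominant b lam1) (h2 : P.IsDominant b lam2)
    (h3 : P.IsDominant b lam3) (h4 : P.IsDominant b lam4)
    (hsum : lam1 + lam2 = lam3 + lam4)
    (hineq : ∀ j : ι, P.IsPositiveRoot b j →
      |P.coroot' j (lam1 - lam2)| ≤ |P.coroot' j (lam3 - lam4)|)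
    (hP12 : P.orbitPolytope lam1 lam2 ⊆ P.chamber b)
    (hP34 : P.orbitPolytope lam3 lam4 ⊆ P.chamber b) :
    P.orbitPolytope lam3 lam4 ⊆ P.orbitPolytope lam1 lam2 :=
  schur_polytope_subset_general P hcrys hred b hb lam1 lam2 lam3 lam4 h4 hsum hineq hP12 hP34
end

section
/- Let λ1, λ2, λ3, λ4 ∈ M be dominant weights with λ1 + λ2 = λ3 + λ4, such that P_{λ1,λ2} ⊆ C_f, P_{λ3,λ4} ⊆ C_f, and P_{λ3,λ4} ⊆ P_{λ1,λ2}. Then ⟨λ3 − λ4, α_i^∨⟩ ≥ ⟨λ1 − λ2, α_i^∨⟩ for every i ∈ I, and consequently λ2 − λ4 is dominant, i.e. ⟨λ2 − λ4, α_i^∨⟩ ≥ 0 for all i ∈ I. -/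
open Set Module Function

/-!
The root form `B` of a finite root system is positive semidefinite and `W`-invariant, so every
point `λ + w μ` lies on the `B`-sphere of radius `|μ|` about `λ`, and `P_{λ,μ}` lies in the
corresponding ball. Since `B(μ - tα, μ - tα) = B(μ, μ) + t (t - ⟨μ, α^∨⟩) B(α, α)`, the point
`λ + μ - tα` with `t > 0` is in that ball only if `t ≤ ⟨μ, α^∨⟩`. Applied to the vertex
`λ₃ + s_i λ₄ = λ₁ + λ₂ - ⟨λ₄, α_i^∨⟩ α_i` of `P_{λ₃,λ₄} ⊆ P_{λ₁,λ₂}`, this gives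
`⟨λ₄, α_i^∨⟩ ≤ ⟨λ₂, α_i^∨⟩`, and both claims follow by pairing `λ₁ + λ₂ = λ₃ + λ₄` with `α_i^∨`.
-/

namespace LinearMap.BilinForm

variable {𝕜 E : Type*} [Field 𝕜] [LinearOrder 𝕜] [IsStrictOrderedRing 𝕜]
  [AddCommGroup E] [Module 𝕜 E]

lemma convexOn_apply_self (B : LinearMap.BilinForm 𝕜 E) (hB : ∀ x, 0 ≤ B x x) :
    ConvexOn 𝕜 univ fun x => B x x := by
  refine ⟨convex_univ, fun x _ y _ a b ha hb hab => ?_⟩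
  -- `a B(x,x) + b B(y,y) - B(ax+by, ax+by) = ab B(x-y, x-y)` when `a + b = 1`
  have hxy := mul_nonneg (mul_nonneg ha hb) (hB (x - y))
  obtain rfl : b = 1 - a := by linear_combination hab
  simp only [map_add, map_sub, map_smul, LinearMap.add_apply, LinearMap.sub_apply,
    LinearMap.smul_apply, smul_eq_mul] at hxy ⊢
  nlinarith

lemma convex_setOf_apply_sub_le (B : LinearMap.BilinForm 𝕜 E) (hB : ∀ x, 0 ≤ B x x)
    (c : E) (r : 𝕜) : Convex 𝕜 {z | B (z - c) (z - c) ≤ r} := by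
  convert ((B.convexOn_apply_self hB).translate_right (-c)).convex_le r using 1
  ext z
  simp only [preimage_univ, mem_univ, true_and, mem_ofPred_eq, Function.comp_apply, neg_add_eq_sub]

end LinearMap.BilinForm

namespace RootPairing.InvariantForm

variable {ι R M N : Type*} [AddCommGroup M] [AddCommGroup N]

section CommRing

variable [CommRing R] [Module R M] [Module R N] {P : RootPairing ι R M N} (B : P.InvariantForm)

lemma two_mul_apply_root (i : ι) (x : M) :
    2 * B.form x (P.root i) = P.coroot' i x * B.form (P.root i) (P.root i) := by
  have h := B.apply_reflection_reflection i x (P.root i)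
  rw [reflection_apply, reflection_apply_self] at h
  simp only [map_sub, map_smul, map_neg, LinearMap.sub_apply, LinearMap.smul_apply,
    smul_eq_mul] at h
  linear_combination -h

lemma apply_sub_smul_root_self (i : ι) (x : M) (t : R) :
    B.form (x - t • P.root i) (x - t • P.root i) =
      B.form x x + t * (t - P.coroot' i x) * B.form (P.root i) (P.root i) := by
  have hsymm : B.form (P.root i) x = B.form x (P.root i) := B.symm.eq (P.root i) x
  simp only [map_sub, map_smul, LinearMap.sub_apply, LinearMap.smul_apply, smul_eq_mul, hsymm]
  linear_combination -t * B.two_mul_apply_root i x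

end CommRing

variable [CommRing R] [LinearOrder R] [IsStrictOrderedRing R] [Module R M] [Module R N]
  {P : RootPairing ι R M N} (B : P.InvariantForm)

lemma le_coroot'_of_apply_sub_smul_root_le (hB : ∀ x, 0 ≤ B.form x x) {i : ι} {x : M} {t : R}
    (ht : 0 < t) (h : B.form (x - t • P.root i) (x - t • P.root i) ≤ B.form x x) :
    t ≤ P.coroot' i x := by
  rw [B.apply_sub_smul_root_self] at h
  have hroot : 0 < B.form (P.root i) (P.root i) := (hB _).lt_of_ne (B.ne_zero i).symm
  by_contra! hlt
  linarith [mul_pos (mul_pos ht (sub_pos.2 hlt)) hroot]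

end RootPairing.InvariantForm

namespace RootSystem

variable {ι M N : Type*} [AddCommGroup M] [Module ℝ M] [AddCommGroup N] [Module ℝ N]
  (P : RootSystem ι ℝ M N)

lemma add_reflection_mem_orbitPolytope (i : ι) (lam mu : M) :
    lam + P.reflection i mu ∈ P.orbitPolytope lam mu :=
  subset_convexHull ℝ _ ⟨RootPairing.Equiv.reflection P.toRootPairing i,
    P.reflection_mem_weylGroup i, rfl⟩

lemma orbitPolytope_subset_setOf_apply_sub_le (B : P.InvariantForm)
    (hB : ∀ x, 0 ≤ B.form x x) (lam mu : M) :
    P.orbitPolytope lam mu ⊆ {z | B.form (z - lam) (z - lam) ≤ B.form mu mu} := by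
  refine convexHull_min ?_ (B.form.convex_setOf_apply_sub_le hB lam _)
  rintro - ⟨w, hw, rfl⟩
  rw [mem_ofPred_eq, add_sub_cancel_left]
  exact (RootPairing.InvariantForm.apply_weylGroup_smul _ (B := B) ⟨w, hw⟩ mu mu).le

lemma coroot'_le_of_orbitPolytope_subset (B : P.InvariantForm) (hB : ∀ x, 0 ≤ B.form x x)
    {lam1 lam2 lam3 lam4 : M} (i : ι) (h2 : 0 ≤ P.coroot' i lam2) (h4 : 0 ≤ P.coroot' i lam4)
    (hsum : lam1 + lam2 = lam3 + lam4)
    (hsub : P.orbitPolytope lam3 lam4 ⊆ P.orbitPolytope lam1 lam2) :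
    P.coroot' i lam4 ≤ P.coroot' i lam2 := by
  rcases h4.eq_or_lt with h0 | hpos
  · exact h0 ▸ h2
  refine B.le_coroot'_of_apply_sub_smul_root_le hB hpos ?_
  have hmem := P.orbitPolytope_subset_setOf_apply_sub_le B hB lam1 lam2
    (hsub (P.add_reflection_mem_orbitPolytope i lam3 lam4))
  have hvertex : lam3 + P.reflection i lam4 - lam1 = lam2 - P.coroot' i lam4 • P.root i := by
    rw [RootPairing.reflection_apply, ← add_sub_assoc, ← hsum]
    abel
  rwa [mem_ofPred_eq, hvertex] at hmem

end RootSystem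

theorem dominance_of_polytope_subset_general {ι M N I : Type*} [Fintype ι]
    [AddCommGroup M] [Module ℝ M] [AddCommGroup N] [Module ℝ N]
    (P : RootSystem ι ℝ M N)
    (b : I → ι)
    (lam1 lam2 lam3 lam4 : M)
    (h2 : P.IsDominant b lam2)
    (h4 : P.IsDominant b lam4)
    (hsum : lam1 + lam2 = lam3 + lam4)
    (hsub : P.orbitPolytope lam3 lam4 ⊆ P.orbitPolytope lam1 lam2) :
    (∀ i : I, P.coroot' (b i) (lam1 - lam2) ≤ P.coroot' (b i) (lam3 - lam4)) ∧
    (∀ i : I, 0 ≤ P.coroot' (b i) (lam2 - lam4)) := by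
  have hle (i : I) : P.coroot' (b i) lam4 ≤ P.coroot' (b i) lam2 :=
    P.coroot'_le_of_orbitPolytope_subset P.toInvariantForm P.zero_le_rootForm (b i) (h2 i) (h4 i)
      hsum hsub
  refine ⟨fun i => ?_, fun i => ?_⟩
  · have hpair := congrArg (P.coroot' (b i)) hsum
    rw [map_add, map_add] at hpair
    rw [map_sub, map_sub]
    linarith [hle i]
  · rw [map_sub]
    linarith [hle i]

/-- polytope containment `P_{λ3,λ4} ⊆ P_{λ1,λ2}` (with both inside `C_f` and
`λ1 + λ2 = λ3 + λ4`) forces `⟨λ3 − λ4, α_i^∨⟩ ≥ ⟨λ1 − λ2, α_i^∨⟩` for all `i`, and hence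
`λ2 − λ4` is dominant. -/
theorem dominance_of_polytope_subset {ι M N I : Type*} [Fintype ι] [Fintype I]
    [AddCommGroup M] [Module ℝ M] [AddCommGroup N] [Module ℝ N]
    (P : RootSystem ι ℝ M N) (hcrys : P.IsCrystallographic) (hred : P.IsReduced)
    (b : I → ι) (hb : P.IsBase b)
    (lam1 lam2 lam3 lam4 : M)
    (h1 : P.IsDominant b lam1) (h2 : P.IsDominant b lam2)
    (h3 : P.IsDominant b lam3) (h4 : P.IsDominant b lam4)
    (hsum : lam1 + lam2 = lam3 + lam4)
    (hP12 : P.orbitPolytope lam1 lam2 ⊆ P.chamber b)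
    (hP34 : P.orbitPolytope lam3 lam4 ⊆ P.chamber b)
    (hsub : P.orbitPolytope lam3 lam4 ⊆ P.orbitPolytope lam1 lam2) :
    (∀ i : I, P.coroot' (b i) (lam1 - lam2) ≤ P.coroot' (b i) (lam3 - lam4)) ∧
    (∀ i : I, 0 ≤ P.coroot' (b i) (lam2 - lam4)) :=
  dominance_of_polytope_subset_general P b lam1 lam2 lam3 lam4 h2 h4 hsum hsub
end
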